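/- Let E_{abc} be a smooth tensor field on an open set Ω ⊆ ℝ⁴ with H²_dR(Ω)=0, satisfying E_{abc}=−E_{bac}, E_{abc}+E_{bca}+E_{cab}=0, and ∂_c Ẽ^{cab}=0 (equivalently ∂_a E_{bcd}+∂_b E_{cad}+∂_c E_{abd}=0). Then there exists a smooth symmetric tensor field h_{ab} on Ω with E_{abc} = (1/2)(∂_a h_{bc} − ∂_b h_{ac}). -/

import Mathlib

noncomputable section

/-- Minkowski metric `diag(+1,-1,-1,-1)` on `Fin 4` (same matrix raises/lowers indices). -/
def eta (a b : Fin 4) : ℝ := if a = b then (if a = 0 then 1 else -1) else 0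

/-- Partial derivative in the coordinate direction `a` on `ℝ⁴ = (Fin 4 → ℝ)`. -/
def pd (a : Fin 4) (f : (Fin 4 → ℝ) → ℝ) : (Fin 4 → ℝ) → ℝ :=
  fun x => fderiv ℝ f x (Pi.single a 1)

/-- Trace `h = η^{ab} h_{ab}`. -/
def trH (h : (Fin 4 → ℝ) → Fin 4 → Fin 4 → ℝ) : (Fin 4 → ℝ) → ℝ :=
  fun x => ∑ a : Fin 4, ∑ b : Fin 4, eta a b * h x a b

/-- Divergence `∂_d h^d{}_a`. -/
def divH (h : (Fin 4 → ℝ) → Fin 4 → Fin 4 → ℝ) (a : Fin 4) : (Fin 4 → ℝ) → ℝ :=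
  fun x => ∑ d : Fin 4, ∑ d' : Fin 4, eta d d' * pd d (fun y => h y d' a) x

/-- The Fierz tensor of `h_{ab}`. -/
def Fierz (h : (Fin 4 → ℝ) → Fin 4 → Fin 4 → ℝ) (a b c : Fin 4) : (Fin 4 → ℝ) → ℝ :=
  fun x => (1/2) * (pd a (fun y => h y b c) x - pd b (fun y => h y a c) x
    + divH h a x * eta b c - divH h b x * eta a c
    - pd a (trH h) x * eta b c + pd b (trH h) x * eta a c)

lemma pd_contDiff {f : (Fin 4 → ℝ) → ℝ} (hf : ContDiff ℝ (⊤ : ℕ∞) f) (a : Fin 4) :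
    ContDiff ℝ (⊤ : ℕ∞) (pd a f) := by
  unfold pd
  exact (hf.fderiv_right (by simp)).clm_apply contDiff_const

lemma pd_comm {f : (Fin 4 → ℝ) → ℝ} (hf : ContDiff ℝ (⊤ : ℕ∞) f) (a b : Fin 4) (x : Fin 4 → ℝ) :
    pd a (pd b f) x = pd b (pd a f) x := by
  have hd2 : Differentiable ℝ (fderiv ℝ f) := (hf.fderiv_right (m := (⊤ : ℕ∞)) (by simp)).differentiable (by simp)
  have key : ∀ v w : Fin 4 → ℝ,
      fderiv ℝ (fun y => fderiv ℝ f y v) x w = fderiv ℝ (fderiv ℝ f) x w v := by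
    intro v w
    rw [fderiv_clm_apply (hd2 x) (differentiableAt_const v)]
    simp
  have hsymm := second_derivative_symmetric
    (f' := fderiv ℝ f) (f'' := fderiv ℝ (fderiv ℝ f) x)
    (fun y => ((hf.differentiable (by simp)) y).hasFDerivAt)
    ((hd2 x).hasFDerivAt) (Pi.single a 1) (Pi.single b 1)
  unfold pd
  rw [key, key, hsymm]

lemma pd_eq_zero_of_eventually {f : (Fin 4 → ℝ) → ℝ} {x : Fin 4 → ℝ}
    (h : ∀ᶠ y in nhds x, f y = 0) (a : Fin 4) : pd a f x = 0 := by
  unfold pd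
  have : f =ᶠ[nhds x] fun _ => (0:ℝ) := h
  rw [this.fderiv_eq]
  simp

lemma pd_expandA {f g p q : (Fin 4 → ℝ) → ℝ} {x : Fin 4 → ℝ}
    (hf : DifferentiableAt ℝ f x) (hg : DifferentiableAt ℝ g x)
    (hp : DifferentiableAt ℝ p x) (hq : DifferentiableAt ℝ q x) (a : Fin 4) :
    pd a (fun y => f y + g y - p y - q y) x = pd a f x + pd a g x - pd a p x - pd a q x := by
  have h1 : HasFDerivAt (fun y => f y + g y - p y - q y)
      (fderiv ℝ f x + fderiv ℝ g x - fderiv ℝ p x - fderiv ℝ q x) x :=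
    ((hf.hasFDerivAt.add hg.hasFDerivAt).sub hp.hasFDerivAt).sub hq.hasFDerivAt
  unfold pd
  rw [h1.fderiv]
  simp

lemma pd_expandB {f g p q : (Fin 4 → ℝ) → ℝ} {x : Fin 4 → ℝ}
    (hf : DifferentiableAt ℝ f x) (hg : DifferentiableAt ℝ g x)
    (hp : DifferentiableAt ℝ p x) (hq : DifferentiableAt ℝ q x) (a : Fin 4) :
    pd a (fun y => f y - g y - (p y - q y)) x = pd a f x - pd a g x - (pd a p x - pd a q x) := by
  have h1 : HasFDerivAt (fun y => f y - g y - (p y - q y))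
      (fderiv ℝ f x - fderiv ℝ g x - (fderiv ℝ p x - fderiv ℝ q x)) x :=
    (hf.hasFDerivAt.sub hg.hasFDerivAt).sub (hp.hasFDerivAt.sub hq.hasFDerivAt)
  unfold pd
  rw [h1.fderiv]
  simp

lemma pd_sub' {f g : (Fin 4 → ℝ) → ℝ} {x : Fin 4 → ℝ}
    (hf : DifferentiableAt ℝ f x) (hg : DifferentiableAt ℝ g x) (a : Fin 4) :
    pd a (fun y => f y - g y) x = pd a f x - pd a g x := by
  unfold pd
  rw [fderiv_fun_sub hf hg]
  simp

/-- a smooth tensor field `E_{abc}` on `Ω` with `E_{abc} = −E_{bac}`,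
the cyclic property, and `∂_a E_{bcd} + ∂_b E_{cad} + ∂_c E_{abd} = 0`
(equivalently `∂_c Ẽ^{cab} = 0`) admits, on a domain with `H²_dR(Ω) = 0`
(every closed 2-form is exact), a symmetric potential:
`E_{abc} = (1/2)(∂_a h_{bc} − ∂_b h_{ac})`. -/
theorem closed_fierz_like_has_symmetric_potential
    (Ω : Set (Fin 4 → ℝ)) (hΩ : IsOpen Ω)
    (hH2 : ∀ A : (Fin 4 → ℝ) → Fin 4 → Fin 4 → ℝ,
      (∀ a b : Fin 4, ContDiff ℝ (⊤ : ℕ∞) fun x => A x a b) →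
      (∀ x, ∀ a b : Fin 4, A x a b = - A x b a) →
      (∀ x ∈ Ω, ∀ a b c : Fin 4,
        pd a (fun y => A y b c) x + pd b (fun y => A y c a) x
          + pd c (fun y => A y a b) x = 0) →
      ∃ v : (Fin 4 → ℝ) → Fin 4 → ℝ,
        (∀ a : Fin 4, ContDiff ℝ (⊤ : ℕ∞) fun x => v x a) ∧
        ∀ x ∈ Ω, ∀ a b : Fin 4,
          A x a b = pd a (fun y => v y b) x - pd b (fun y => v y a) x)
    (E : (Fin 4 → ℝ) → Fin 4 → Fin 4 → Fin 4 → ℝ)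
    (hsm : ∀ a b c : Fin 4, ContDiff ℝ (⊤ : ℕ∞) fun x => E x a b c)
    (hanti : ∀ x, ∀ a b c : Fin 4, E x a b c = - E x b a c)
    (hcyc : ∀ x, ∀ a b c : Fin 4, E x a b c + E x b c a + E x c a b = 0)
    (hclosed : ∀ x ∈ Ω, ∀ a b c d : Fin 4,
      pd a (fun y => E y b c d) x + pd b (fun y => E y c a d) x
        + pd c (fun y => E y a b d) x = 0) :
    ∃ h : (Fin 4 → ℝ) → Fin 4 → Fin 4 → ℝ,
      (∀ a b : Fin 4, ContDiff ℝ (⊤ : ℕ∞) fun x => h x a b) ∧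
      (∀ x, ∀ a b : Fin 4, h x a b = h x b a) ∧
      ∀ x ∈ Ω, ∀ a b c : Fin 4,
        E x a b c
          = (1/2) * (pd a (fun y => h y b c) x - pd b (fun y => h y a c) x) := by
  -- Step 1: for each fixed last index d, the 2-form A_{ab} = E_{abd} is closed, get potentials v d
  have H1 : ∀ d : Fin 4, ∃ v : (Fin 4 → ℝ) → Fin 4 → ℝ,
      (∀ a : Fin 4, ContDiff ℝ (⊤ : ℕ∞) fun x => v x a) ∧
      ∀ x ∈ Ω, ∀ a b : Fin 4,
        E x a b d = pd a (fun y => v y b) x - pd b (fun y => v y a) x := by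
    intro d
    exact hH2 (fun x a b => E x a b d) (fun a b => hsm a b d)
      (fun x a b => hanti x a b d) (fun x hx a b c => hclosed x hx a b c d)
  choose v hv hvE using H1
  -- differentiability shortcuts
  have dv : ∀ (d a : Fin 4) (x : Fin 4 → ℝ), DifferentiableAt ℝ (fun y => v d y a) x :=
    fun d a x => ((hv d a).differentiable (by simp)) x
  -- Step 2: S_{ab} = w_{ab} - w_{ba} = v b · a - v a · b is a closed antisymmetric 2-form
  have hSclosed : ∀ x ∈ Ω, ∀ a b c : Fin 4,
      pd a (fun y => v c y b - v b y c) x + pd b (fun y => v a y c - v c y a) x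
        + pd c (fun y => v b y a - v a y b) x = 0 := by
    intro x hx a b c
    rw [pd_sub' (dv c b x) (dv b c x), pd_sub' (dv a c x) (dv c a x),
      pd_sub' (dv b a x) (dv a b x)]
    have e1 := hvE c x hx a b
    have e2 := hvE a x hx b c
    have e3 := hvE b x hx c a
    have e4 := hcyc x a b c
    linarith
  obtain ⟨u, hu, huS⟩ := hH2 (fun x a b => v b x a - v a x b)
    (fun a b => (hv b a).sub (hv a b)) (fun x a b => by ring) hSclosed
  have du : ∀ (a b : Fin 4) (x : Fin 4 → ℝ),
      DifferentiableAt ℝ (fun y => pd a (fun z => u z b) y) x :=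
    fun a b x => ((pd_contDiff (hu b) a).differentiable (by simp)) x
  -- Step 3: the symmetric potential
  refine ⟨fun x p q => v q x p + v p x q - pd p (fun y => u y q) x - pd q (fun y => u y p) x,
    ?_, ?_, ?_⟩
  · intro a b
    exact (((hv b a).add (hv a b)).sub (pd_contDiff (hu b) a)).sub (pd_contDiff (hu a) b)
  · intro x a b; ring
  · intro x hx a b c
    have EA : pd a (fun y => v c y b + v b y c
          - pd b (fun z => u z c) y - pd c (fun z => u z b) y) x
        = pd a (fun y => v c y b) x + pd a (fun y => v b y c) x
          - pd a (pd b (fun z => u z c)) x - pd a (pd c (fun z => u z b)) x :=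
      pd_expandA (dv c b x) (dv b c x) (du b c x) (du c b x) a
    have EB : pd b (fun y => v c y a + v a y c
          - pd a (fun z => u z c) y - pd c (fun z => u z a) y) x
        = pd b (fun y => v c y a) x + pd b (fun y => v a y c) x
          - pd b (pd a (fun z => u z c)) x - pd b (pd c (fun z => u z a)) x :=
      pd_expandA (dv c a x) (dv a c x) (du a c x) (du c a x) b
    have e1 := hvE c x hx a b
    have e2 := hvE b x hx a c
    have e3 := hvE a x hx b c
    have comm1 : pd a (pd b (fun z => u z c)) x = pd b (pd a (fun z => u z c)) x :=
      pd_comm (hu c) a b x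
    have comm2 : pd a (pd c (fun z => u z b)) x = pd c (pd a (fun z => u z b)) x :=
      pd_comm (hu b) a c x
    have comm3 : pd b (pd c (fun z => u z a)) x = pd c (pd b (fun z => u z a)) x :=
      pd_comm (hu a) b c x
    -- the function S_{ab} - (du_b/dx^a - du_a/dx^b) vanishes on Ω, hence its pd vanishes at x
    have hz : pd c (fun y => v b y a - v a y b
        - (pd a (fun z => u z b) y - pd b (fun z => u z a) y)) x = 0 := by
      apply pd_eq_zero_of_eventually
      filter_upwards [hΩ.mem_nhds hx] with y hy
      have h := huS y hy a b
      linarith [h]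
    have hzexp : pd c (fun y => v b y a) x - pd c (fun y => v a y b) x
        - (pd c (pd a (fun z => u z b)) x - pd c (pd b (fun z => u z a)) x) = 0 := by
      rw [← pd_expandB (dv b a x) (dv a b x) (du a b x) (du b a x) c]
      exact hz
    have cyc1 := hcyc x a c b
    have anti1 := hanti x c b a
    have anti2 := hanti x b a c
    rw [EA, EB]
    linarith
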